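/- Let t > 1 and 0 ≤ θ < (t−1)/(2t). Let MN and PQ be two edges of a greedy t-spanner in the Euclidean plane that intersect at an interior point and make angle at most θ with each other. Then neither of the projections of the segments on a common baseline direction is contained in the other (they are endpoint-ordered). -/

import Mathlib

/-!
Greedy spanners are shortcut-free: for distinct edges `MN` and `PQ`,
`t |MP| + |PQ| + t |QN| > t |MN|`. Otherwise, whichever of the two edges the algorithm examined
last would already have been `t`-spanned when it was examined: by the other edge, together with
`t`-paths for `MP` and `QN` (or `PM` and `NQ`), pairs that are strictly shorter and therefore
processed earlier.

If the edges cross at an angle `α` and the projection of `PQ` on the direction of `MN` lies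
inside that of `MN`, then splitting `P - M` and `N - Q` into components along and across `MN`
gives `|MP| + |QN| ≤ |MN| - |PQ| (cos α - sin α)`. This is a shortcut as soon as
`t (cos α - sin α) ≥ 1`, which holds for `α < (t - 1) / (2t)`. At such an acute angle, the
order of the points along `MN` carries over to the direction of `PQ`. The reverse containment
is therefore the same situation with the two edges exchanged.
-/

open Classical RealInnerProductSpace

noncomputable section

/-- The two-dimensional Euclidean plane. -/
abbrev E2 := EuclideanSpace ℝ (Fin 2)


noncomputable section

/-- The length of a path given as a list of points: the sum of the metric
distances of consecutive points. -/
def chainLength {X : Type*} [PseudoMetricSpace X] : List X → ℝ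
  | [] => 0
  | [_] => 0
  | a :: b :: rest => dist a b + chainLength (b :: rest)

/-- `p` is a path from `u` to `v` using only (undirected) edges from `E`. -/
def IsPathIn {X : Type*} (E : Set (X × X)) (p : List X) (u v : X) : Prop :=
  p ≠ [] ∧ p.head? = some u ∧ p.getLast? = some v ∧
    p.Chain' (fun a b => (a, b) ∈ E ∨ (b, a) ∈ E)

/-- One step of the naive greedy spanner algorithm: add the pair `e` as an edge
unless a path of length at most `t · dist e.1 e.2` already exists. -/
def greedyStep {X : Type*} [PseudoMetricSpace X] (t : ℝ)
    (S : Finset (X × X)) (e : X × X) : Finset (X × X) :=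
  if ∃ p : List X, IsPathIn (↑S) p e.1 e.2 ∧ chainLength p ≤ t * dist e.1 e.2
  then S else insert e S

/-- The naive greedy spanner algorithm run over a list of pairs. -/
def naiveGreedy {X : Type*} [PseudoMetricSpace X] (t : ℝ) (l : List (X × X)) :
    Finset (X × X) :=
  l.foldl (greedyStep t) ∅

section Paths

variable {X : Type*}

lemma IsPathIn.mono {E E' : Set (X × X)} {p : List X} {u v : X} (hE : E ⊆ E')
    (h : IsPathIn E p u v) : IsPathIn E' p u v :=
  ⟨h.1, h.2.1, h.2.2.1, h.2.2.2.imp fun _ _ => Or.imp (@hE _) (@hE _)⟩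

lemma IsPathIn.reverse {E : Set (X × X)} {p : List X} {u v : X} (h : IsPathIn E p u v) :
    IsPathIn E p.reverse v u := by
  obtain ⟨hne, hhead, hlast, hchain⟩ := h
  refine ⟨by simpa using hne, by rwa [List.head?_reverse], by rwa [List.getLast?_reverse], ?_⟩
  exact List.isChain_reverse.mpr (hchain.imp fun _ _ => Or.symm)

lemma IsPathIn.append {E : Set (X × X)} {p₁ p₂ : List X} {m a b n : X}
    (h₁ : IsPathIn E p₁ m a) (h₂ : IsPathIn E p₂ b n)
    (hab : (a, b) ∈ E ∨ (b, a) ∈ E) :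
    IsPathIn E (p₁ ++ p₂) m n := by
  obtain ⟨hne₁, hhead₁, hlast₁, hchain₁⟩ := h₁
  obtain ⟨hne₂, hhead₂, hlast₂, hchain₂⟩ := h₂
  refine ⟨by simp [hne₁], by rwa [List.head?_append_of_ne_nil _ hne₁],
    by rwa [List.getLast?_append_of_ne_nil _ hne₂], ?_⟩
  refine List.isChain_append.mpr ⟨hchain₁, hchain₂, fun x hx y hy => ?_⟩
  rw [hlast₁, Option.mem_some_iff] at hx
  rw [hhead₂, Option.mem_some_iff] at hy
  subst hx hy
  exact hab

end Paths

section Greedy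

variable {X : Type*} [PseudoMetricSpace X]

lemma chainLength_append : ∀ (xs : List X) {a b : X} (ys : List X),
    xs.getLast? = some a → ys.head? = some b →
    chainLength (xs ++ ys) = chainLength xs + dist a b + chainLength ys
  | [], _, _, _, hx, _ => by simp at hx
  | [x], a, b, ys, hx, hy => by
      obtain ⟨ys, rfl⟩ : ∃ ys', ys = b :: ys' := List.head?_eq_some_iff.mp hy
      obtain rfl : x = a := by simpa using hx
      simp [chainLength]
  | x :: x' :: xs, a, b, ys, hx, hy => by
      rw [List.getLast?_cons_cons] at hx
      simp only [List.cons_append, chainLength] at *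
      rw [← List.cons_append, chainLength_append (x' :: xs) ys hx hy]
      ring

lemma chainLength_reverse : ∀ p : List X, chainLength p.reverse = chainLength p
  | [] | [_] => rfl
  | a :: b :: rest => by
      have hlast : (b :: rest).reverse.getLast? = some b := by simp
      rw [List.reverse_cons, chainLength_append _ [a] hlast rfl, chainLength_reverse (b :: rest)]
      simp only [chainLength]
      rw [dist_comm]
      ring

def HasTPath (t : ℝ) (E : Set (X × X)) (u v : X) : Prop :=
  ∃ p : List X, IsPathIn E p u v ∧ chainLength p ≤ t * dist u v

variable {t : ℝ} {E : Set (X × X)}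

lemma hasTPath_self (u : X) : HasTPath t E u u :=
  ⟨[u], ⟨List.cons_ne_nil _ _, rfl, rfl, List.isChain_singleton u⟩, by simp [chainLength]⟩

lemma hasTPath_of_mem (ht : 1 ≤ t) {a b : X} (hab : (a, b) ∈ E) : HasTPath t E a b :=
  ⟨[a, b], ⟨by simp, rfl, rfl, List.isChain_pair.mpr (Or.inl hab)⟩, by
    simpa [chainLength] using le_mul_of_one_le_left dist_nonneg ht⟩

lemma HasTPath.mono {E' : Set (X × X)} {u v : X} (hE : E ⊆ E') (h : HasTPath t E u v) :
    HasTPath t E' u v :=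
  let ⟨p, hp, hlen⟩ := h
  ⟨p, IsPathIn.mono hE hp, hlen⟩

lemma HasTPath.symm {u v : X} (h : HasTPath t E u v) : HasTPath t E v u :=
  let ⟨p, hp, hlen⟩ := h
  ⟨p.reverse, IsPathIn.reverse hp, by rwa [chainLength_reverse, dist_comm]⟩

lemma HasTPath.shortcut {m a b n : X} (h₁ : HasTPath t E m a) (h₂ : HasTPath t E b n)
    (hab : (a, b) ∈ E) (hle : t * dist m a + dist a b + t * dist b n ≤ t * dist m n) :
    HasTPath t E m n := by
  obtain ⟨p₁, hp₁, hlen₁⟩ := h₁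
  obtain ⟨p₂, hp₂, hlen₂⟩ := h₂
  refine ⟨p₁ ++ p₂, IsPathIn.append hp₁ hp₂ (Or.inl hab), ?_⟩
  rw [chainLength_append p₁ p₂ hp₁.2.2.1 hp₂.2.1]
  linarith

lemma greedyStep_of_hasTPath {S : Finset (X × X)} {e : X × X}
    (h : HasTPath t (↑S) e.1 e.2) : greedyStep t S e = S :=
  if_pos h

lemma greedyStep_of_not_hasTPath {S : Finset (X × X)} {e : X × X}
    (h : ¬ HasTPath t (↑S) e.1 e.2) : greedyStep t S e = insert e S :=
  if_neg h

lemma subset_greedyStep (S : Finset (X × X)) (e : X × X) : S ⊆ greedyStep t S e := by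
  by_cases h : HasTPath t (↑S) e.1 e.2
  · rw [greedyStep_of_hasTPath h]
  · rw [greedyStep_of_not_hasTPath h]
    exact Finset.subset_insert e S

lemma greedyStep_subset_insert (S : Finset (X × X)) (e : X × X) :
    greedyStep t S e ⊆ insert e S := by
  by_cases h : HasTPath t (↑S) e.1 e.2
  · rw [greedyStep_of_hasTPath h]
    exact Finset.subset_insert e S
  · rw [greedyStep_of_not_hasTPath h]

lemma naiveGreedy_append_singleton (l : List (X × X)) (e : X × X) :
    naiveGreedy t (l ++ [e]) = greedyStep t (naiveGreedy t l) e :=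
  List.foldl_append ..

lemma subset_foldl_greedyStep : ∀ (l : List (X × X)) (S : Finset (X × X)),
    S ⊆ l.foldl (greedyStep t) S
  | [], _ => subset_rfl
  | e :: l, S => (subset_greedyStep S e).trans (subset_foldl_greedyStep l _)

lemma naiveGreedy_mono {l₁ l₂ : List (X × X)} (h : l₁ <+: l₂) :
    naiveGreedy t l₁ ⊆ naiveGreedy t l₂ := by
  obtain ⟨r, rfl⟩ := h
  exact (subset_foldl_greedyStep r _).trans_eq (List.foldl_append ..).symm

lemma mem_of_mem_naiveGreedy {l : List (X × X)} {e : X × X} (he : e ∈ naiveGreedy t l) :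
    e ∈ l := by
  induction l using List.reverseRecOn with
  | nil => simp [naiveGreedy] at he
  | append_singleton l x ih =>
    rw [naiveGreedy_append_singleton] at he
    rcases Finset.mem_insert.mp (greedyStep_subset_insert _ _ he) with rfl | he
    · simp
    · simp [ih he]

lemma hasTPath_naiveGreedy_of_mem (ht : 1 ≤ t) {l : List (X × X)} {a b : X}
    (hab : (a, b) ∈ l) : HasTPath t (↑(naiveGreedy t l)) a b := by
  obtain ⟨l₁, l₂, rfl⟩ := List.append_of_mem hab
  have hsub : naiveGreedy t (l₁ ++ [(a, b)]) ⊆ naiveGreedy t (l₁ ++ (a, b) :: l₂) :=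
    naiveGreedy_mono ⟨l₂, by simp⟩
  refine HasTPath.mono (Finset.coe_subset.mpr hsub) ?_
  by_cases h : HasTPath t (↑(naiveGreedy t l₁)) a b
  · exact h.mono (Finset.coe_subset.mpr (naiveGreedy_mono (List.prefix_append _ _)))
  · refine hasTPath_of_mem ht ?_
    rw [naiveGreedy_append_singleton, greedyStep_of_not_hasTPath h]
    exact Finset.mem_insert_self _ _

def AddedAfter (t : ℝ) (l : List (X × X)) (e f : X × X) : Prop :=
  ∃ l₁ l₂, l = l₁ ++ e :: l₂ ∧ ¬ HasTPath t (↑(naiveGreedy t l₁)) e.1 e.2 ∧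
    f ∈ naiveGreedy t l₁

lemma AddedAfter.append_singleton {l : List (X × X)} {e f : X × X} (h : AddedAfter t l e f)
    (x : X × X) : AddedAfter t (l ++ [x]) e f :=
  let ⟨l₁, l₂, hl, hno, hf⟩ := h
  ⟨l₁, l₂ ++ [x], by simp [hl], hno, hf⟩

lemma addedAfter_or_addedAfter {l : List (X × X)} {e f : X × X}
    (he : e ∈ naiveGreedy t l) (hf : f ∈ naiveGreedy t l) (hef : e ≠ f) :
    AddedAfter t l e f ∨ AddedAfter t l f e := by
  induction l using List.reverseRecOn with
  | nil => simp [naiveGreedy] at he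
  | append_singleton l x ih =>
    by_cases hold : e ∈ naiveGreedy t l ∧ f ∈ naiveGreedy t l
    · exact (ih hold.1 hold.2).imp (·.append_singleton x) (·.append_singleton x)
    rw [naiveGreedy_append_singleton] at he hf
    have hnew : ¬ HasTPath t (↑(naiveGreedy t l)) x.1 x.2 := fun h => by
      rw [greedyStep_of_hasTPath h] at he hf
      exact hold ⟨he, hf⟩
    rw [greedyStep_of_not_hasTPath hnew, Finset.mem_insert] at he hf
    rcases he with rfl | he <;> rcases hf with rfl | hf
    · exact absurd rfl hef
    · exact Or.inl ⟨l, [], rfl, hnew, hf⟩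
    · exact Or.inr ⟨l, [], rfl, hnew, he⟩
    · exact absurd ⟨he, hf⟩ hold

variable {l l₁ l₂ : List (X × X)} {x : X × X}

lemma dist_le_of_mem_prefix
    (hsort : List.Pairwise (fun a b : X × X => dist a.1 a.2 ≤ dist b.1 b.2) l)
    (hl : l = l₁ ++ x :: l₂) {y : X × X} (hy : y ∈ l₁) :
    dist y.1 y.2 ≤ dist x.1 x.2 := by
  subst hl
  exact (List.pairwise_append.mp hsort).2.2 y hy x List.mem_cons_self

lemma mem_prefix_of_dist_lt
    (hsort : List.Pairwise (fun a b : X × X => dist a.1 a.2 ≤ dist b.1 b.2) l)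
    (hl : l = l₁ ++ x :: l₂) {y : X × X} (hy : y ∈ l) (hlt : dist y.1 y.2 < dist x.1 x.2) :
    y ∈ l₁ := by
  subst hl
  rcases List.mem_append.mp hy with hy | hy
  · exact hy
  · refine absurd ?_ hlt.not_ge
    rcases List.mem_cons.mp hy with rfl | hy
    · exact le_rfl
    · exact List.rel_of_pairwise_cons (List.pairwise_append.mp hsort).2.1 hy

lemma hasTPath_naiveGreedy_prefix (ht : 1 ≤ t) {V : Finset X}
    (hsort : List.Pairwise (fun a b : X × X => dist a.1 a.2 ≤ dist b.1 b.2) l)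
    (hcomp : ∀ P ∈ V, ∀ Q ∈ V, P ≠ Q → (P, Q) ∈ l ∨ (Q, P) ∈ l)
    (hl : l = l₁ ++ x :: l₂) {a b : X} (ha : a ∈ V) (hb : b ∈ V)
    (hlt : dist a b < dist x.1 x.2) : HasTPath t (↑(naiveGreedy t l₁)) a b := by
  rcases eq_or_ne a b with rfl | hab
  · exact hasTPath_self a
  rcases hcomp a ha b hb hab with h | h
  · exact hasTPath_naiveGreedy_of_mem ht (mem_prefix_of_dist_lt hsort hl h hlt)
  · refine (hasTPath_naiveGreedy_of_mem ht (mem_prefix_of_dist_lt hsort hl h ?_)).symm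
    rwa [dist_comm]

end Greedy

section Shortcut

variable {X : Type*} [MetricSpace X] {t : ℝ} {V : Finset X} {l : List (X × X)}

lemma AddedAfter.not_shortcut (ht : 1 ≤ t)
    (hmem : ∀ e ∈ l, e.1 ∈ V ∧ e.2 ∈ V ∧ e.1 ≠ e.2)
    (hsort : List.Pairwise (fun a b : X × X => dist a.1 a.2 ≤ dist b.1 b.2) l)
    (hcomp : ∀ P ∈ V, ∀ Q ∈ V, P ≠ Q → (P, Q) ∈ l ∨ (Q, P) ∈ l)
    {a b c d : X} (h : AddedAfter t l (a, b) (c, d)) :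
    ¬ t * dist a c + dist c d + t * dist d b ≤ t * dist a b := by
  intro hle
  obtain ⟨l₁, l₂, hl, hno, hcd⟩ := h
  have hcd_l : (c, d) ∈ l := by
    rw [hl]
    exact List.mem_append_left _ (mem_of_mem_naiveGreedy hcd)
  obtain ⟨haV, hbV, -⟩ := hmem (a, b) (by rw [hl]; simp)
  obtain ⟨hcV, hdV, hcd_ne⟩ := hmem (c, d) hcd_l
  have hcd_pos : 0 < dist c d := dist_pos.mpr hcd_ne
  have hac : dist a c < dist a b := by nlinarith [dist_nonneg (x := d) (y := b)]
  have hdb : dist d b < dist a b := by nlinarith [dist_nonneg (x := a) (y := c)]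
  exact hno ((hasTPath_naiveGreedy_prefix ht hsort hcomp hl haV hcV hac).shortcut
    (hasTPath_naiveGreedy_prefix ht hsort hcomp hl hdV hbV hdb) hcd hle)

theorem naiveGreedy_shortcut_free (ht : 1 ≤ t)
    (hmem : ∀ e ∈ l, e.1 ∈ V ∧ e.2 ∈ V ∧ e.1 ≠ e.2)
    (hsort : List.Pairwise (fun a b : X × X => dist a.1 a.2 ≤ dist b.1 b.2) l)
    (hcomp : ∀ P ∈ V, ∀ Q ∈ V, P ≠ Q → (P, Q) ∈ l ∨ (Q, P) ∈ l)
    {M N P Q : X} (hMN : (M, N) ∈ naiveGreedy t l) (hPQ : (P, Q) ∈ naiveGreedy t l)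
    (hne : (M, N) ≠ (P, Q)) :
    ¬ t * dist M P + dist P Q + t * dist Q N ≤ t * dist M N := by
  intro hle
  rcases addedAfter_or_addedAfter hMN hPQ hne with h | h
  · exact h.not_shortcut ht hmem hsort hcomp hle
  · -- `PQ` came last, so `|MN| ≤ |PQ|` and the same detour, run backwards, spans `PQ`.
    obtain ⟨l₁, l₂, hl, -, hMN₁⟩ := id h
    have hlen : dist M N ≤ dist P Q :=
      dist_le_of_mem_prefix hsort hl (mem_of_mem_naiveGreedy hMN₁)
    refine h.not_shortcut ht hmem hsort hcomp ?_
    rw [dist_comm P M, dist_comm N Q]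
    nlinarith

end Shortcut

section Geometry

open InnerProductGeometry Real

variable {F : Type*} [NormedAddCommGroup F] [InnerProductSpace ℝ F]

lemma norm_le_abs_inner_add_norm_sub {u : F} (hu : ‖u‖ = 1) (x : F) :
    ‖x‖ ≤ |⟪x, u⟫| + ‖x - ⟪x, u⟫ • u‖ :=
  calc ‖x‖ = ‖⟪x, u⟫ • u + (x - ⟪x, u⟫ • u)‖ := by rw [add_sub_cancel]
    _ ≤ |⟪x, u⟫| + ‖x - ⟪x, u⟫ • u‖ := by
      refine (norm_add_le _ _).trans_eq ?_
      rw [norm_smul, hu, mul_one, Real.norm_eq_abs]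

lemma norm_sub_inner_smul_eq_mul_sin {u : F} (hu : ‖u‖ = 1) (w : F) :
    ‖w - ⟪w, u⟫ • u‖ = ‖w‖ * sin (angle u w) := by
  have hcos : ⟪w, u⟫ = ‖w‖ * cos (angle u w) := by
    rw [real_inner_comm, ← cos_angle_mul_norm_mul_norm, hu]
    ring
  have hsin : 0 ≤ sin (angle u w) :=
    sin_nonneg_of_nonneg_of_le_pi (angle_nonneg u w) (angle_le_pi u w)
  refine (pow_left_inj₀ (norm_nonneg _) (mul_nonneg (norm_nonneg w) hsin) two_ne_zero).mp ?_
  rw [norm_sub_sq_real, real_inner_smul_right, norm_smul, hu, Real.norm_eq_abs, mul_one, sq_abs,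
    hcos]
  linear_combination (-‖w‖ ^ 2) * sin_sq_add_cos_sq (angle u w)

lemma norm_le_inner_div_add_mul_sin {x d w : F} {c e : ℝ} (hd : d ≠ 0) (he : 0 ≤ e)
    (hxd : 0 ≤ ⟪x, d⟫) (hx : x = c • d - e • w) :
    ‖x‖ ≤ ⟪x, d⟫ / ‖d‖ + e * (‖w‖ * sin (angle d w)) := by
  have hd_pos : 0 < ‖d‖ := norm_pos_iff.mpr hd
  set u := ‖d‖⁻¹ • d with hu_def
  have hu : ‖u‖ = 1 := norm_smul_inv_norm hd
  have hxu : ⟪x, u⟫ = ⟪x, d⟫ / ‖d‖ := by rw [real_inner_smul_right, inv_mul_eq_div]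
  have hdu : ⟪d, u⟫ • u = d := by
    have : ⟪d, u⟫ = ‖d‖ := by
      rw [hu_def, real_inner_smul_right, real_inner_self_eq_norm_sq]
      field_simp
    rw [this, hu_def, smul_smul, mul_inv_cancel₀ hd_pos.ne', one_smul]
  have hperp : x - ⟪x, u⟫ • u = (-e) • (w - ⟪w, u⟫ • u) := by
    rw [hx, inner_sub_left, real_inner_smul_left, real_inner_smul_left, sub_smul, mul_smul,
      mul_smul, hdu]
    module
  calc ‖x‖ ≤ |⟪x, u⟫| + ‖x - ⟪x, u⟫ • u‖ := norm_le_abs_inner_add_norm_sub hu x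
    _ = ⟪x, d⟫ / ‖d‖ + e * (‖w‖ * sin (angle d w)) := by
      rw [hperp, norm_smul, norm_neg, Real.norm_of_nonneg he, norm_sub_inner_smul_eq_mul_sin hu,
        angle_smul_left_of_pos d w (inv_pos.mpr hd_pos), hxu, abs_of_nonneg (by positivity)]

lemma exists_sub_eq_of_mem_segment {M N P Q z : F}
    (hz₁ : z ∈ segment ℝ M N) (hz₂ : z ∈ segment ℝ P Q) :
    ∃ a b : ℝ, 0 ≤ b ∧ b ≤ 1 ∧ P - M = a • (N - M) - b • (Q - P) ∧
      N - Q = (1 - a) • (N - M) - (1 - b) • (Q - P) := by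
  rw [segment_eq_image'] at hz₁ hz₂
  obtain ⟨a, -, rfl⟩ := hz₁
  obtain ⟨b, ⟨hb0, hb1⟩, hz⟩ := hz₂
  simp only at hz
  have hPM : P - M = a • (N - M) - b • (Q - P) :=
    calc P - M = (P + b • (Q - P)) - M - b • (Q - P) := by abel
      _ = a • (N - M) - b • (Q - P) := by rw [hz]; abel
  refine ⟨a, b, hb0, hb1, hPM, ?_⟩
  calc N - Q = (N - M) - (Q - P) - (P - M) := by abel
    _ = (1 - a) • (N - M) - (1 - b) • (Q - P) := by rw [hPM]; module

lemma dist_add_dist_le_of_mem_segment {M N P Q z : F} (hMN : M ≠ N)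
    (hz₁ : z ∈ segment ℝ M N) (hz₂ : z ∈ segment ℝ P Q)
    (hMP : ⟪M, N - M⟫ ≤ ⟪P, N - M⟫) (hQN : ⟪Q, N - M⟫ ≤ ⟪N, N - M⟫) :
    dist M P + dist Q N ≤
      dist M N - dist P Q * (cos (angle (N - M) (Q - P)) - sin (angle (N - M) (Q - P))) := by
  obtain ⟨a, b, hb0, hb1, hPM, hNQ⟩ := exists_sub_eq_of_mem_segment hz₁ hz₂
  have hd : N - M ≠ 0 := sub_ne_zero.mpr hMN.symm
  have h₁ := norm_le_inner_div_add_mul_sin hd hb0 (by rw [inner_sub_left]; linarith) hPM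
  have h₂ := norm_le_inner_div_add_mul_sin hd (sub_nonneg.mpr hb1)
    (by rw [inner_sub_left]; linarith) hNQ
  have hsum : ⟪P - M, N - M⟫ / ‖N - M‖ + ⟪N - Q, N - M⟫ / ‖N - M‖ =
      ‖N - M‖ - ‖Q - P‖ * cos (angle (N - M) (Q - P)) := by
    have hd_pos : 0 < ‖N - M‖ := norm_pos_iff.mpr hd
    rw [← add_div, ← inner_add_left, show P - M + (N - Q) = (N - M) - (Q - P) by abel,
      inner_sub_left, real_inner_self_eq_norm_sq, real_inner_comm, ← cos_angle_mul_norm_mul_norm]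
    field_simp
  rw [dist_eq_norm', dist_eq_norm', dist_eq_norm', dist_eq_norm']
  linarith

lemma inner_smul_sub_smul_nonpos {d w : F} {a b : ℝ} (hb : 0 ≤ b) (hdw : 0 ≤ ⟪d, w⟫)
    (h : ⟪a • d - b • w, d⟫ ≤ 0) : ⟪a • d - b • w, w⟫ ≤ 0 := by
  rw [inner_sub_left, real_inner_smul_left, real_inner_smul_left, real_inner_self_eq_norm_sq,
    real_inner_comm d w] at h
  rw [inner_sub_left, real_inner_smul_left, real_inner_smul_left, real_inner_self_eq_norm_sq]
  by_cases hd : d = 0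
  · simp only [hd, inner_zero_left, mul_zero, zero_sub, neg_nonpos]
    positivity
  have hcs : ⟪d, w⟫ ^ 2 ≤ ‖d‖ ^ 2 * ‖w‖ ^ 2 := by
    rw [← mul_pow, ← sq_abs]
    exact pow_le_pow_left₀ (abs_nonneg _) (abs_real_inner_le_norm d w) 2
  refine nonpos_of_mul_nonpos_right ?_ (pow_pos (norm_pos_iff.mpr hd) 2)
  nlinarith [mul_nonneg hdw (neg_nonneg.mpr h), mul_le_mul_of_nonneg_left hcs hb]

lemma inner_le_inner_of_mem_segment {M N P Q z : F}
    (hz₁ : z ∈ segment ℝ M N) (hz₂ : z ∈ segment ℝ P Q) (hdw : 0 ≤ ⟪N - M, Q - P⟫)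
    (hPM : ⟪P, N - M⟫ ≤ ⟪M, N - M⟫) (hNQ : ⟪N, N - M⟫ ≤ ⟪Q, N - M⟫) :
    ⟪P, Q - P⟫ ≤ ⟪M, Q - P⟫ ∧ ⟪N, Q - P⟫ ≤ ⟪Q, Q - P⟫ := by
  obtain ⟨a, b, hb0, hb1, hPM_eq, hNQ_eq⟩ := exists_sub_eq_of_mem_segment hz₁ hz₂
  constructor
  · rw [← sub_nonpos, ← inner_sub_left, hPM_eq]
    exact inner_smul_sub_smul_nonpos hb0 hdw (by rw [← hPM_eq, inner_sub_left]; linarith)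
  · rw [← sub_nonpos, ← inner_sub_left, hNQ_eq]
    exact inner_smul_sub_smul_nonpos (sub_nonneg.mpr hb1) hdw
      (by rw [← hNQ_eq, inner_sub_left]; linarith)

lemma one_le_mul_cos_sub_sin {t α : ℝ} (ht : 0 < t) (hα0 : 0 ≤ α)
    (hα : α < (t - 1) / (2 * t)) : 1 ≤ t * (cos α - sin α) := by
  have h2tα : 2 * t * α < t - 1 := by rwa [lt_div_iff₀ (by positivity), mul_comm] at hα
  have hα_half : α < 1 / 2 := by
    refine hα.trans_le ?_
    rw [div_le_div_iff₀ (by positivity) two_pos]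
    linarith
  nlinarith [one_sub_sq_div_two_le_cos (x := α), sin_le hα0]

lemma inner_nonneg_of_one_le_mul_cos_sub_sin {t : ℝ} {x y : F} (ht : 0 < t)
    (hcs : 1 ≤ t * (cos (angle x y) - sin (angle x y))) : 0 ≤ ⟪x, y⟫ := by
  have hsin := sin_nonneg_of_nonneg_of_le_pi (angle_nonneg x y) (angle_le_pi x y)
  rw [← cos_angle_mul_norm_mul_norm]
  exact mul_nonneg (by nlinarith) (by positivity)

lemma shortcut_of_inner_le {t : ℝ} {M N P Q z : F} (ht : 0 < t)
    (hcs : 1 ≤ t * (cos (angle (N - M) (Q - P)) - sin (angle (N - M) (Q - P))))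
    (hz₁ : z ∈ segment ℝ M N) (hz₂ : z ∈ segment ℝ P Q)
    (hMP : ⟪M, N - M⟫ ≤ ⟪P, N - M⟫) (hQN : ⟪Q, N - M⟫ ≤ ⟪N, N - M⟫) :
    t * dist M P + dist P Q + t * dist Q N ≤ t * dist M N := by
  have hMN : M ≠ N := by
    rintro rfl
    rw [sub_self, angle_zero_left, cos_pi_div_two, sin_pi_div_two] at hcs
    linarith
  have h := dist_add_dist_le_of_mem_segment hMN hz₁ hz₂ hMP hQN
  nlinarith [mul_le_mul_of_nonneg_left h ht.le,
    mul_le_mul_of_nonneg_left hcs (dist_nonneg (x := P) (y := Q))]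

end Geometry

theorem intersecting_edges_endpoint_ordered_general {t θ : ℝ} (ht : 1 < t)
    (hθ : θ < (t - 1) / (2 * t))
    (V : Finset E2) (l : List (E2 × E2))
    (hmem : ∀ e ∈ l, e.1 ∈ V ∧ e.2 ∈ V ∧ e.1 ≠ e.2)
    (hsort : List.Pairwise (fun a b => dist a.1 a.2 ≤ dist b.1 b.2) l)
    (hcomp : ∀ P ∈ V, ∀ Q ∈ V, P ≠ Q → (P, Q) ∈ l ∨ (Q, P) ∈ l)
    (M N P Q : E2)
    (hMN : (M, N) ∈ naiveGreedy t l) (hPQ : (P, Q) ∈ naiveGreedy t l)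
    (hne : (M, N) ≠ (P, Q))
    (hangle : InnerProductGeometry.angle (N - M) (Q - P) ≤ θ)
    (hcross : ∃ z : E2, z ∈ openSegment ℝ M N ∧ z ∈ openSegment ℝ P Q) :
    ¬ Set.uIcc (⟪P, N - M⟫ : ℝ) ⟪Q, N - M⟫ ⊆
        Set.uIcc (⟪M, N - M⟫ : ℝ) ⟪N, N - M⟫ ∧
      ¬ Set.uIcc (⟪M, N - M⟫ : ℝ) ⟪N, N - M⟫ ⊆
        Set.uIcc (⟪P, N - M⟫ : ℝ) ⟪Q, N - M⟫ := by
  have ht₀ : 0 < t := by linarith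
  have hcs :=
    one_le_mul_cos_sub_sin ht₀ (InnerProductGeometry.angle_nonneg _ _) (hangle.trans_lt hθ)
  obtain ⟨z, hz₁, hz₂⟩ := hcross
  replace hz₁ := openSegment_subset_segment ℝ M N hz₁
  replace hz₂ := openSegment_subset_segment ℝ P Q hz₂
  have hMN_le : ⟪M, N - M⟫ ≤ ⟪N, N - M⟫ := by
    rw [← sub_nonneg, ← inner_sub_left]
    exact real_inner_self_nonneg
  have hPQ_le : ⟪P, N - M⟫ ≤ ⟪Q, N - M⟫ := by
    rw [← sub_nonneg, ← inner_sub_left, real_inner_comm]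
    exact inner_nonneg_of_one_le_mul_cos_sub_sin ht₀ hcs
  rw [Set.uIcc_of_le hPQ_le, Set.uIcc_of_le hMN_le, Set.Icc_subset_Icc_iff hPQ_le,
    Set.Icc_subset_Icc_iff hMN_le]
  constructor
  · rintro ⟨hMP, hQN⟩
    exact naiveGreedy_shortcut_free ht.le hmem hsort hcomp hMN hPQ hne
      (shortcut_of_inner_le ht₀ hcs hz₁ hz₂ hMP hQN)
  · rintro ⟨hPM, hNQ⟩
    obtain ⟨hPM', hNQ'⟩ := inner_le_inner_of_mem_segment hz₁ hz₂
      (inner_nonneg_of_one_le_mul_cos_sub_sin ht₀ hcs) hPM hNQ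
    exact naiveGreedy_shortcut_free ht.le hmem hsort hcomp hPQ hMN hne.symm
      (shortcut_of_inner_le ht₀ (by rwa [InnerProductGeometry.angle_comm]) hz₂ hz₁ hPM' hNQ')

/-- **Intersecting almost-parallel greedy edges are endpoint-ordered.**
Let `t > 1`, `0 ≤ θ < (t−1)/(2t)`, and let `MN` and `PQ` be two edges of a
greedy `t`-spanner in the Euclidean plane that intersect at an interior point
and make angle at most `θ` with each other. Then, projecting onto the common
baseline (the direction of `MN`), neither projection interval is contained in
the other. -/
theorem intersecting_edges_endpoint_ordered {t θ : ℝ} (ht : 1 < t)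
    (hθ0 : 0 ≤ θ) (hθ : θ < (t - 1) / (2 * t))
    (V : Finset E2) (l : List (E2 × E2))
    (hmem : ∀ e ∈ l, e.1 ∈ V ∧ e.2 ∈ V ∧ e.1 ≠ e.2)
    (hsort : List.Pairwise (fun a b => dist a.1 a.2 ≤ dist b.1 b.2) l)
    (hcomp : ∀ P ∈ V, ∀ Q ∈ V, P ≠ Q → (P, Q) ∈ l ∨ (Q, P) ∈ l)
    (M N P Q : E2)
    (hMN : (M, N) ∈ naiveGreedy t l) (hPQ : (P, Q) ∈ naiveGreedy t l)
    (hne : (M, N) ≠ (P, Q))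
    (hangle : InnerProductGeometry.angle (N - M) (Q - P) ≤ θ)
    (hcross : ∃ z : E2, z ∈ openSegment ℝ M N ∧ z ∈ openSegment ℝ P Q) :
    ¬ Set.uIcc (⟪P, N - M⟫ : ℝ) ⟪Q, N - M⟫ ⊆
        Set.uIcc (⟪M, N - M⟫ : ℝ) ⟪N, N - M⟫ ∧
      ¬ Set.uIcc (⟪M, N - M⟫ : ℝ) ⟪N, N - M⟫ ⊆
        Set.uIcc (⟪P, N - M⟫ : ℝ) ⟪Q, N - M⟫ :=
  intersecting_edges_endpoint_ordered_general ht hθ V l hmem hsort hcomp M N P Q hMN hPQ hne hangle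
    hcross
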